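/- Let K be a field, L a finite field extension of K, and H a finite-dimensional K-bialgebra such that L/K is H-Galois via α. Then the space of H-invariants of L is exactly K: the set {x ∈ L | α(h)(x) = ε(h)·x for all h ∈ H} equals the image of K in L. -/

import Mathlib

open TensorProduct

section Defs

variable (K L H : Type) [Field K] [Field L] [Algebra K L] [Ring H] [Bialgebra K H]

/-- `L` is a left `H`-module algebra via `α`. -/
def IsModuleAlgebra (α : H →ₐ[K] Module.End K L) : Prop :=
  (∀ h : H, α h 1 = Coalgebra.counit (R := K) h • (1 : L)) ∧
  ∀ h : H,
    (α h : L →ₗ[K] L) ∘ₗ LinearMap.mul' K L =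
      LinearMap.mul' K L ∘ₗ
        TensorProduct.homTensorHomMap (RingHom.id K) L L L L
          (TensorProduct.map (α.toLinearMap : H →ₗ[K] (L →ₗ[K] L))
            (α.toLinearMap : H →ₗ[K] (L →ₗ[K] L)) (Coalgebra.comul (R := K) h))

noncomputable def lsmulLift (V M : Type) [AddCommGroup V] [Module K V] [AddCommGroup M]
    [Module K M] [Module L M] [IsScalarTower K L M] [SMulCommClass K L M]
    (φ : V →ₗ[K] M) : L ⊗[K] V →ₗ[K] M :=
  TensorProduct.lift
    (LinearMap.mk₂ K (fun (x : L) (v : V) => x • φ v)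
      (fun x x' v => add_smul x x' (φ v))
      (fun c x v => smul_assoc c x (φ v))
      (fun x v v' => by (try dsimp only); rw [map_add, smul_add])
      (fun c x v => by (try dsimp only); rw [map_smul, smul_comm]))

/-- The canonical (Galois) map `L ⊗[K] H →ₗ[K] End_K(L)`, `x ⊗ h ↦ (y ↦ x * α h y)`. -/
noncomputable def canMap (α : H →ₐ[K] Module.End K L) : L ⊗[K] H →ₗ[K] (L →ₗ[K] L) :=
  lsmulLift K L H (L →ₗ[K] L) (α.toLinearMap : H →ₗ[K] (L →ₗ[K] L))

/-- The annihilator `J(L0)` of an intermediate field. -/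
def Jann (α : H →ₐ[K] Module.End K L) (L0 : IntermediateField K L) : Submodule K H where
  carrier := {h : H | ∀ x ∈ L0, α h x = 0}
  add_mem' := by
    intro a b ha hb x hx
    simp [map_add, LinearMap.add_apply, ha x hx, hb x hx]
  zero_mem' := by intro x hx; simp
  smul_mem' := by
    intro c a ha x hx
    simp [map_smul, LinearMap.smul_apply, ha x hx]

/-- The map `H →ₗ[K] Hom_K(L0, L)`, `h ↦ (α h)|_{L0}`. -/
def resMap (α : H →ₐ[K] Module.End K L) (L0 : IntermediateField K L) :
    H →ₗ[K] (↥L0 →ₗ[K] L) where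
  toFun h := (α h : L →ₗ[K] L) ∘ₗ L0.val.toLinearMap
  map_add' h h' := by ext x; simp
  map_smul' c h := by ext x; simp

lemma Jann_le_ker (α : H →ₐ[K] Module.End K L) (L0 : IntermediateField K L) :
    Jann K L H α L0 ≤ LinearMap.ker (resMap K L H α L0) := by
  intro h hh
  rw [LinearMap.mem_ker]
  ext x
  exact hh x x.2

/-- The induced canonical map `L ⊗[K] (H / J(L0)) →ₗ[K] Hom_K(L0, L)`. -/
noncomputable def can0 (α : H →ₐ[K] Module.End K L) (L0 : IntermediateField K L) :
    L ⊗[K] (H ⧸ Jann K L H α L0) →ₗ[K] (↥L0 →ₗ[K] L) :=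
  lsmulLift K L (H ⧸ Jann K L H α L0) (↥L0 →ₗ[K] L)
    ((Jann K L H α L0).liftQ (resMap K L H α L0) (Jann_le_ker K L H α L0))

/-- `L0` is an `H`-subextension: the induced canonical map is injective. -/
def IsHSubextension (α : H →ₐ[K] Module.End K L) (L0 : IntermediateField K L) : Prop :=
  Function.Injective (can0 K L H α L0)

end Defs

section Statement

variable (K L H : Type) [Field K] [Field L] [Algebra K L] [Ring H] [Bialgebra K H]

/-- If a finite extension `L/K` is `H`-Galois for a finite-dimensional `K`-bialgebra `H`,
then the `H`-invariants of `L` are exactly (the image of) `K`. -/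
theorem invariants_eq_bot_of_isHGalois [FiniteDimensional K L] [FiniteDimensional K H]
    (α : H →ₐ[K] Module.End K L) (hMA : IsModuleAlgebra K L H α)
    (hGal : Function.Bijective (canMap K L H α)) :
    {x : L | ∀ h : H, α h x = Coalgebra.counit (R := K) h • x} =
      Set.range (algebraMap K L) := by
  ext x
  simp only [Set.mem_setOf_eq, Set.mem_range]
  constructor
  · intro hx
    -- Key: for invariant x, α h (y * x) = α h y * x.
    have key : ∀ (h : H) (y : L), α h (y * x) = α h y * x := by
      intro h y
      have hcomp := LinearMap.congr_fun (hMA.2 h) (y ⊗ₜ[K] x)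
      -- two linear maps on H ⊗ H
      let P : H ⊗[K] H →ₗ[K] L :=
        (LinearMap.mul' K L) ∘ₗ (LinearMap.applyₗ (y ⊗ₜ[K] x)) ∘ₗ
          (TensorProduct.homTensorHomMap (RingHom.id K) L L L L) ∘ₗ
          (TensorProduct.map (α.toLinearMap : H →ₗ[K] (L →ₗ[K] L))
            (α.toLinearMap : H →ₗ[K] (L →ₗ[K] L)))
      let Q : H ⊗[K] H →ₗ[K] L :=
        (LinearMap.mulRight K x) ∘ₗ (LinearMap.applyₗ y) ∘ₗ
          (α.toLinearMap : H →ₗ[K] (L →ₗ[K] L)) ∘ₗ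
          (TensorProduct.rid K H).toLinearMap ∘ₗ
          (LinearMap.lTensor H (Coalgebra.counit (R := K) (A := H)))
      have hPQ : P = Q := by
        apply TensorProduct.ext'
        intro a b
        have h1 : P (a ⊗ₜ[K] b) = α a y * α b x := rfl
        have h2 : Q (a ⊗ₜ[K] b) = Coalgebra.counit (R := K) b • (α a y * x) := by
          simp only [Q, LinearMap.coe_comp, Function.comp_apply, LinearMap.lTensor_tmul,
            LinearEquiv.coe_coe, TensorProduct.rid_tmul, map_smul, AlgHom.toLinearMap_apply,
            LinearMap.smul_apply, LinearMap.mulRight_apply, LinearMap.applyₗ_apply_apply,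
            smul_mul_assoc]
        rw [h1, h2, hx b, mul_smul_comm]
      have hP : P (Coalgebra.comul (R := K) h) =
          LinearMap.mul' K L
            (TensorProduct.homTensorHomMap (RingHom.id K) L L L L
              (TensorProduct.map (α.toLinearMap : H →ₗ[K] (L →ₗ[K] L))
                (α.toLinearMap : H →ₗ[K] (L →ₗ[K] L)) (Coalgebra.comul (R := K) h))
              (y ⊗ₜ[K] x)) := rfl
      have hQ : Q (Coalgebra.comul (R := K) h) = α h y * x := by
        simp only [Q, LinearMap.coe_comp, Function.comp_apply]
        rw [show (LinearMap.lTensor H (Coalgebra.counit (R := K) (A := H)))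
              (Coalgebra.comul (R := K) h) = h ⊗ₜ[K] (1 : K) from
            Coalgebra.lTensor_counit_comul h]
        simp [TensorProduct.rid_tmul]
      calc α h (y * x) = P (Coalgebra.comul (R := K) h) := by
            rw [hP]
            simpa only [LinearMap.coe_comp, Function.comp_apply,
              LinearMap.mul'_apply] using hcomp
        _ = Q (Coalgebra.comul (R := K) h) := by rw [hPQ]
        _ = α h y * x := hQ
    -- Every map in the range of canMap is right-x-linear
    have keyCan : ∀ (z : L ⊗[K] H) (y : L), canMap K L H α z (y * x) = canMap K L H α z y * x := by
      intro z
      induction z using TensorProduct.induction_on with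
      | zero => intro y; simp
      | tmul a h =>
        intro y
        have hcan : ∀ w : L, canMap K L H α (a ⊗ₜ[K] h) w = a * α h w := fun w => rfl
        rw [hcan, hcan, key, mul_assoc]
      | add u v hu hv => intro y; simp [map_add, LinearMap.add_apply, hu, hv, add_mul]
    -- hence every K-linear map is right-x-linear
    have keyAll : ∀ (f : L →ₗ[K] L) (y : L), f (y * x) = f y * x := by
      intro f y
      obtain ⟨z, hz⟩ := hGal.2 f
      rw [← hz]; exact keyCan z y
    -- conclude x ∈ K·1
    by_contra hnx
    have hxp : x ∉ Submodule.span K ({(1 : L)} : Set L) := by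
      intro hmem
      rw [Submodule.mem_span_singleton] at hmem
      obtain ⟨c, hc⟩ := hmem
      exact hnx ⟨c, by rw [Algebra.algebraMap_eq_smul_one, hc]⟩
    obtain ⟨f, hf1, hf2⟩ :=
      Submodule.exists_dual_map_eq_bot_of_notMem hxp inferInstance
    have hone : f 1 = 0 := by
      have : f 1 ∈ (Submodule.span K ({(1 : L)} : Set L)).map f :=
        Submodule.mem_map_of_mem (Submodule.mem_span_singleton_self 1)
      rw [hf2] at this
      simpa using this
    have hfx : (Algebra.linearMap K L ∘ₗ f) x = 0 := by
      have := keyAll (Algebra.linearMap K L ∘ₗ f) 1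
      rw [one_mul] at this
      rw [this]
      simp [hone]
    simp only [LinearMap.coe_comp, Function.comp_apply, Algebra.linearMap_apply] at hfx
    exact hf1 (by
      have := (map_eq_zero_iff (algebraMap K L) (algebraMap K L).injective).mp hfx
      exact this)
  · rintro ⟨c, rfl⟩ h
    rw [Algebra.algebraMap_eq_smul_one, map_smul, hMA.1 h, smul_comm]

end Statement
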